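/- The limsup over n → ∞ of Z_n · sqrt(n) is at most sqrt(e/π), where Z_n := (1/n!) · Σ_{σ ∈ S_n} 2^{-c(σ)}. -/

import Mathlib

open scoped BigOperators

/-- `Z_n = (1/n!) · Σ_{σ ∈ S_n} 2^{-c(σ)}`, where `c(σ)` is the number of cycles of `σ`
of length greater than one (the cardinality of the cycle type of `σ`). -/
noncomputable def Zseq (n : ℕ) : ℝ :=
  (Nat.factorial n : ℝ)⁻¹ *
    ∑ σ : Equiv.Perm (Fin n), ((2 : ℝ) ^ σ.cycleType.card)⁻¹

open Equiv Equiv.Perm Finset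

variable {α : Type*} [Fintype α] [DecidableEq α]

lemma card_cycleType_swap_mul_fixed {g : Perm α} {a b : α} (hab : a ≠ b)
    (ha : g a = a) (hb : g b = b) :
    Multiset.card ((Equiv.swap a b * g).cycleType) = Multiset.card g.cycleType + 1 := by
  have hd : (Equiv.swap a b).Disjoint g := by
    intro x
    rcases eq_or_ne x a with rfl | hxa
    · right; exact ha
    rcases eq_or_ne x b with rfl | hxb
    · right; exact hb
    · left; exact Equiv.swap_apply_of_ne_of_ne hxa hxb
  rw [hd.cycleType_mul, Multiset.card_add, (isCycle_swap hab).cycleType]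
  simp [add_comm]

lemma card_cycleType_swap_mul_self {g : Perm α} {a : α} (ha : g a ≠ a) (ha2 : g (g a) ≠ a) :
    Multiset.card ((Equiv.swap a (g a) * g).cycleType) = Multiset.card g.cycleType := by
  set c := g.cycleOf a with hc
  have hmem : c ∈ g.cycleFactorsFinset :=
    cycleOf_mem_cycleFactorsFinset_iff.2 (mem_support.2 ha)
  have hcomm : Commute c g := self_mem_cycle_factors_commute hmem
  have hca : c a = g a := cycleOf_apply_self g a
  have hcca : c (c a) ≠ a := by
    rw [hca, cycleOf_apply_apply_self g a]; exact ha2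
  have hccycle : c.IsCycle := isCycle_cycleOf g ha
  set d := g * c⁻¹ with hd
  have hdisj : d.Disjoint c := disjoint_mul_inv_of_mem_cycleFactorsFinset hmem
  have hgd : c * d = g := by
    rw [hd, ← mul_assoc, hcomm.eq, mul_assoc, mul_inv_cancel, mul_one]
  have hC' : IsCycle (Equiv.swap a (c a) * c) := hccycle.swap_mul (by rw [hca]; exact ha) hcca
  have hsupp : (Equiv.swap a (c a) * c).support = c.support \ {a} :=
    support_swap_mul_eq c a hcca
  have hdisj' : (Equiv.swap a (c a) * c).Disjoint d := by
    intro x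
    rcases hdisj x with hx | hx
    · right; exact hx
    · left
      have : x ∉ (Equiv.swap a (c a) * c).support := by
        rw [hsupp]
        simp [Finset.mem_sdiff, notMem_support.2 hx]
      exact notMem_support.1 this
  have key : Equiv.swap a (g a) * g = (Equiv.swap a (c a) * c) * d := by
    rw [mul_assoc, hgd, hca]
  rw [key, hdisj'.cycleType_mul, Multiset.card_add, ← hgd, hdisj.symm.cycleType_mul,
    Multiset.card_add, card_cycleType_eq_one.2 hC', card_cycleType_eq_one.2 hccycle]

def succEquiv (n : ℕ) : Fin n ≃ {x : Fin (n+1) // x ≠ 0} where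
  toFun x := ⟨x.succ, Fin.succ_ne_zero x⟩
  invFun y := (y : Fin (n+1)).pred y.2
  left_inv x := by simp
  right_inv y := by simp

lemma ext0_eq {n : ℕ} (e : Perm (Fin n)) :
    Equiv.Perm.decomposeFin.symm (0, e) = e.extendDomain (succEquiv n) := by
  ext x
  refine Fin.cases ?_ (fun i => ?_) x
  · rw [Equiv.Perm.decomposeFin_symm_apply_zero,
      Perm.extendDomain_apply_not_subtype _ _ (by simp)]
  · rw [Equiv.Perm.decomposeFin_symm_apply_succ]
    have h : (i.succ : Fin (n+1)) = ((succEquiv n) i : Fin (n+1)) := rfl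
    rw [h, Perm.extendDomain_apply_image]
    simp [succEquiv]

lemma card_ext0 {n : ℕ} (e : Perm (Fin n)) :
    Multiset.card (Equiv.Perm.decomposeFin.symm (0, e)).cycleType
      = Multiset.card e.cycleType := by
  rw [ext0_eq, Equiv.Perm.cycleType_extendDomain]

lemma symm_eq_swap_mul {n : ℕ} (p : Fin (n+1)) (e : Perm (Fin n)) :
    Equiv.Perm.decomposeFin.symm (p, e)
      = Equiv.swap 0 p * Equiv.Perm.decomposeFin.symm (0, e) := by
  ext x
  refine Fin.cases ?_ (fun i => ?_) x <;>
    simp [Equiv.Perm.decomposeFin_symm_apply_zero, Equiv.Perm.decomposeFin_symm_apply_succ,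
      Equiv.Perm.mul_apply]

lemma card_symm_succ {n : ℕ} (e : Perm (Fin n)) (q : Fin n) :
    Multiset.card (Equiv.Perm.decomposeFin.symm (q.succ, e)).cycleType
      = Multiset.card e.cycleType + if e q = q then 1 else 0 := by
  set f := Equiv.Perm.decomposeFin.symm (0, e) with hfdef
  have hf0 : f 0 = 0 := Equiv.Perm.decomposeFin_symm_apply_zero 0 e
  have hfs : ∀ i : Fin n, f i.succ = (e i).succ := by
    intro i
    rw [hfdef, Equiv.Perm.decomposeFin_symm_apply_succ]
    simp
  have hcf : Multiset.card f.cycleType = Multiset.card e.cycleType := card_ext0 e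
  rw [symm_eq_swap_mul, ← hfdef]
  by_cases hq : e q = q
  · rw [if_pos hq, ← hcf]
    exact card_cycleType_swap_mul_fixed (Fin.succ_ne_zero q).symm hf0 (by rw [hfs, hq])
  · rw [if_neg hq, add_zero, ← hcf]
    set h := Equiv.swap 0 q.succ * f with hh
    have h0 : h 0 = q.succ := by simp [hh, hf0]
    have hh0 : h 0 ≠ 0 := by rw [h0]; exact Fin.succ_ne_zero q
    have hsq : h q.succ = (e q).succ := by
      rw [hh, Equiv.Perm.mul_apply, hfs]
      exact Equiv.swap_apply_of_ne_of_ne (Fin.succ_ne_zero (e q))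
        (fun hc => hq (Fin.succ_injective _ hc))
    have hhh : h (h 0) ≠ 0 := by rw [h0, hsq]; exact Fin.succ_ne_zero (e q)
    have key := card_cycleType_swap_mul_self hh0 hhh
    have hback : Equiv.swap 0 (h 0) * h = f := by
      rw [h0, hh, ← mul_assoc, Equiv.swap_mul_self, one_mul]
    rw [hback] at key
    exact key.symm

noncomputable def wgt {n : ℕ} (σ : Perm (Fin n)) : ℝ := ((2:ℝ) ^ Multiset.card σ.cycleType)⁻¹

noncomputable def Sseq (n : ℕ) : ℝ := ∑ σ : Perm (Fin n), wgt σ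

lemma wgt_pos {n : ℕ} (σ : Perm (Fin n)) : 0 < wgt σ := by
  unfold wgt; positivity

lemma sum_decompose {n : ℕ} {M : Type*} [AddCommMonoid M] (F : Perm (Fin (n+1)) → M) :
    ∑ σ : Perm (Fin (n+1)), F σ
      = ∑ p : Fin (n+1), ∑ e : Perm (Fin n), F (Equiv.Perm.decomposeFin.symm (p, e)) := by
  rw [← Equiv.sum_comp (Equiv.Perm.decomposeFin.symm) F, Fintype.sum_prod_type]

lemma wgt_ext0 {n : ℕ} (e : Perm (Fin n)) :
    wgt (Equiv.Perm.decomposeFin.symm (0, e)) = wgt e := by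
  unfold wgt; rw [card_ext0]

lemma wgt_symm_succ {n : ℕ} (e : Perm (Fin n)) (q : Fin n) :
    wgt (Equiv.Perm.decomposeFin.symm (q.succ, e))
      = if e q = q then wgt e * 2⁻¹ else wgt e := by
  unfold wgt
  rw [card_symm_succ]
  by_cases hq : e q = q
  · rw [if_pos hq, if_pos hq, pow_add, pow_one, mul_inv]
  · rw [if_neg hq, if_neg hq, add_zero]


lemma sum_fix (m : ℕ) :
    ∑ e : Perm (Fin (m+1)), (∑ q : Fin (m+1), if e q = q then wgt e else 0)
      = (m+1 : ℝ) * Sseq m := by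
  rw [Finset.sum_comm]
  have hq : ∀ q : Fin (m+1),
      (∑ e : Perm (Fin (m+1)), if e q = q then wgt e else 0) = Sseq m := by
    intro q
    set t := Equiv.swap (0 : Fin (m+1)) q with ht
    set C : Perm (Fin (m+1)) ≃ Perm (Fin (m+1)) :=
      (Equiv.mulLeft t).trans (Equiv.mulRight t) with hC
    have hconj : ∀ e : Perm (Fin (m+1)),
        (if (C e) q = q then wgt (C e) else 0) = (if e 0 = 0 then wgt e else 0) := by
      intro e
      have hCq : (C e) q = t (e 0) := by
        simp [hC, ht, Equiv.Perm.mul_apply]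
      have hcond : ((C e) q = q) ↔ (e 0 = 0) := by
        rw [hCq]
        constructor
        · intro hcq
          exact t.injective (a₁ := e 0) (a₂ := 0) (by rw [hcq]; simp [ht])
        · intro h0; rw [h0]; simp [ht]
      have hwc : wgt (C e) = wgt e := by
        unfold wgt
        congr 1
        have hCe : C e = t * e * t⁻¹ := by
          simp [hC, ht, mul_assoc]
        rw [hCe, Equiv.Perm.cycleType_conj]
      rw [hwc, if_congr hcond rfl rfl]
    calc (∑ e : Perm (Fin (m+1)), if e q = q then wgt e else 0)
        = ∑ e : Perm (Fin (m+1)), (if (C e) q = q then wgt (C e) else 0) :=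
          (Equiv.sum_comp C fun e => if e q = q then wgt e else 0).symm
      _ = ∑ e : Perm (Fin (m+1)), (if e 0 = 0 then wgt e else 0) :=
          Finset.sum_congr rfl fun e _ => hconj e
      _ = ∑ p : Fin (m+1), ∑ d : Perm (Fin m),
            (if (Equiv.Perm.decomposeFin.symm (p, d)) 0 = 0
              then wgt (Equiv.Perm.decomposeFin.symm (p, d)) else 0) :=
          sum_decompose _
      _ = ∑ p : Fin (m+1), ∑ d : Perm (Fin m),
            (if p = 0 then wgt (Equiv.Perm.decomposeFin.symm (p, d)) else 0) := by
          refine Finset.sum_congr rfl fun p _ => Finset.sum_congr rfl fun d _ => ?_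
          rw [Equiv.Perm.decomposeFin_symm_apply_zero]
      _ = Sseq m := by
          rw [Finset.sum_eq_single 0]
          · have h0 : ∀ d : Perm (Fin m),
                (if (0 : Fin (m+1)) = 0
                  then wgt (Equiv.Perm.decomposeFin.symm ((0 : Fin (m+1)), d)) else 0)
                = wgt d := by
              intro d; rw [if_pos rfl, wgt_ext0]
            rw [Finset.sum_congr rfl fun d _ => h0 d]; rfl
          · intro p _ hp; simp [hp]
          · intro h; exact absurd (Finset.mem_univ _) h
  simp_rw [hq]
  rw [Finset.sum_const, Finset.card_univ]
  simp [mul_comm]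

noncomputable def Zseq' (n : ℕ) : ℝ :=
  (Nat.factorial n : ℝ)⁻¹ * ∑ σ : Equiv.Perm (Fin n), ((2 : ℝ) ^ Multiset.card σ.cycleType)⁻¹

lemma Zseq'_eq (n : ℕ) : Zseq' n = (Nat.factorial n : ℝ)⁻¹ * Sseq n := rfl

lemma Sseq_rec (n : ℕ) :
    Sseq (n+2) = (n+2 : ℝ) * Sseq (n+1) - ((n+1 : ℝ)/2) * Sseq n := by
  have step1 : Sseq (n+2)
      = ∑ p : Fin (n+2), ∑ e : Perm (Fin (n+1)),
          wgt (Equiv.Perm.decomposeFin.symm (p, e)) := sum_decompose _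
  rw [step1, Fin.sum_univ_succ]
  simp_rw [wgt_ext0, wgt_symm_succ]
  rw [Finset.sum_comm]
  have inner : ∀ e : Perm (Fin (n+1)),
      (∑ q : Fin (n+1), if e q = q then wgt e * 2⁻¹ else wgt e)
        = (n+1 : ℝ) * wgt e - 2⁻¹ * (∑ q : Fin (n+1), if e q = q then wgt e else 0) := by
    intro e
    have point : ∀ q : Fin (n+1), (if e q = q then wgt e * 2⁻¹ else wgt e)
        = wgt e - 2⁻¹ * (if e q = q then wgt e else 0) := by
      intro q; split <;> ring
    rw [Finset.sum_congr rfl fun q _ => point q, Finset.sum_sub_distrib, ← Finset.mul_sum,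
      Finset.sum_const, Finset.card_univ, Fintype.card_fin, nsmul_eq_mul]
    push_cast
    ring
  rw [Finset.sum_congr rfl fun e _ => inner e, Finset.sum_sub_distrib, ← Finset.mul_sum,
    ← Finset.mul_sum, sum_fix n]
  have : (∑ e : Perm (Fin (n+1)), wgt e) = Sseq (n+1) := rfl
  rw [this]
  push_cast
  ring

lemma Zseq'_zero : Zseq' 0 = 1 := by
  have : ∀ σ : Perm (Fin 0), wgt σ = 1 := by
    intro σ
    have hσ : σ = 1 := Subsingleton.elim σ 1
    simp [wgt, hσ]
  rw [Zseq'_eq]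
  unfold Sseq
  rw [Finset.sum_congr rfl fun σ _ => this σ, Finset.sum_const, Finset.card_univ]
  simp

lemma Zseq'_one : Zseq' 1 = 1 := by
  have : ∀ σ : Perm (Fin 1), wgt σ = 1 := by
    intro σ
    have hσ : σ = 1 := Subsingleton.elim σ 1
    simp [wgt, hσ]
  rw [Zseq'_eq]
  unfold Sseq
  rw [Finset.sum_congr rfl fun σ _ => this σ, Finset.sum_const, Finset.card_univ]
  simp

lemma Zseq'_pos (n : ℕ) : 0 < Zseq' n := by
  rw [Zseq'_eq]
  have h1 : 0 < Sseq n := Finset.sum_pos (fun σ _ => wgt_pos σ) ⟨1, Finset.mem_univ 1⟩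
  have h2 : (0:ℝ) < (Nat.factorial n : ℝ) := by positivity
  positivity

lemma Zseq'_rec (n : ℕ) :
    Zseq' (n+2) = Zseq' (n+1) - Zseq' n / (2 * (n+2 : ℝ)) := by
  have hfact2 : (Nat.factorial (n+2) : ℝ) = (n+2 : ℝ) * (n+1 : ℝ) * (Nat.factorial n : ℝ) := by
    rw [Nat.factorial_succ, Nat.factorial_succ]
    push_cast
    ring
  have hfact1 : (Nat.factorial (n+1) : ℝ) = (n+1 : ℝ) * (Nat.factorial n : ℝ) := by
    rw [Nat.factorial_succ]; push_cast; ring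
  have hf0 : (Nat.factorial n : ℝ) ≠ 0 := by positivity
  have hn1 : (n+1 : ℝ) ≠ 0 := by positivity
  have hn2 : (n+2 : ℝ) ≠ 0 := by positivity
  rw [Zseq'_eq, Zseq'_eq, Zseq'_eq, Sseq_rec, hfact2, hfact1]
  field_simp

-- Part 2 : the explicit convolution formula
noncomputable def bseq (n : ℕ) : ℝ := ∏ i ∈ Finset.range n, (2*(i:ℝ)+1)/(2*(i:ℝ)+2)

lemma bseq_zero : bseq 0 = 1 := by simp [bseq]

lemma bseq_succ (n : ℕ) : bseq (n+1) = bseq n * ((2*(n:ℝ)+1)/(2*(n:ℝ)+2)) :=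
  Finset.prod_range_succ _ _

lemma bseq_pos (n : ℕ) : 0 < bseq n := by
  unfold bseq
  apply Finset.prod_pos
  intro i _
  positivity

lemma bseq_le_one (n : ℕ) : bseq n ≤ 1 := by
  induction n with
  | zero => simp [bseq_zero]
  | succ m ih =>
    rw [bseq_succ]
    have h1 : (2*(m:ℝ)+1)/(2*(m:ℝ)+2) ≤ 1 := by
      rw [div_le_one (by positivity)]; linarith
    have := bseq_pos m
    nlinarith

lemma bseq_antitone : ∀ {m n : ℕ}, m ≤ n → bseq n ≤ bseq m := by
  intro m n h
  induction n with
  | zero => simp_all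
  | succ k ih =>
    rcases Nat.lt_or_ge m (k+1) with hlt | hge
    · have hk : m ≤ k := Nat.lt_succ_iff.mp hlt
      refine le_trans ?_ (ih hk)
      rw [bseq_succ]
      have h1 : (2*(k:ℝ)+1)/(2*(k:ℝ)+2) ≤ 1 := by
        rw [div_le_one (by positivity)]; linarith
      have := bseq_pos k
      nlinarith
    · have : m = k+1 := le_antisymm h hge
      rw [this]

noncomputable def aseq (k : ℕ) : ℝ := (2:ℝ)⁻¹ ^ k / (Nat.factorial k : ℝ)

lemma aseq_zero : aseq 0 = 1 := by simp [aseq]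

lemma aseq_pos (k : ℕ) : 0 < aseq k := by
  unfold aseq; positivity

lemma aseq_succ_mul (k : ℕ) : ((k:ℝ)+1) * aseq (k+1) = aseq k / 2 := by
  unfold aseq
  rw [Nat.factorial_succ, pow_succ]
  have h1 : ((k:ℝ)+1) ≠ 0 := by positivity
  have h2 : (Nat.factorial k : ℝ) ≠ 0 := by positivity
  push_cast
  field_simp

lemma aseq_le (k : ℕ) : aseq k ≤ (2:ℝ)⁻¹ ^ k := by
  unfold aseq
  rw [div_le_iff₀ (by positivity)]
  have h1 : (1:ℝ) ≤ (Nat.factorial k : ℝ) := by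
    exact_mod_cast Nat.one_le_iff_ne_zero.2 (Nat.factorial_ne_zero k)
  nlinarith [pow_pos (by norm_num : (0:ℝ) < 2⁻¹) k]

noncomputable def Yseq (n : ℕ) : ℝ := ∑ k ∈ Finset.range (n+1), aseq k * bseq (n - k)

lemma Yseq_zero : Yseq 0 = 1 := by
  simp [Yseq, aseq_zero, bseq_zero]

lemma Yseq_one : Yseq 1 = 1 := by
  rw [Yseq]
  rw [Finset.sum_range_succ, Finset.sum_range_one]
  norm_num [aseq, bseq_succ, bseq_zero]

lemma sum_k_aux (m : ℕ) :
    ∑ k ∈ Finset.range (m+2), (k:ℝ) * aseq k * bseq (m+1-k) = Yseq m / 2 := by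
  rw [Finset.sum_range_succ']
  have hterm : ∀ i : ℕ, ((i+1 : ℕ):ℝ) * aseq (i+1) * bseq (m+1-(i+1))
      = aseq i * bseq (m - i) / 2 := by
    intro i
    have h1 : m+1-(i+1) = m - i := Nat.succ_sub_succ m i
    have h2 : ((i:ℝ)+1) * aseq (i+1) = aseq i / 2 := aseq_succ_mul i
    rw [h1]
    push_cast
    rw [mul_assoc, ← mul_assoc ((i:ℝ)+1), h2]
    ring
  rw [Finset.sum_congr rfl fun i _ => hterm i]
  simp only [Nat.cast_zero, zero_mul, add_zero]
  rw [← Finset.sum_div]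
  rfl

lemma Yseq_rec (n : ℕ) :
    ((n:ℝ)+2) * Yseq (n+2) = ((n:ℝ)+2) * Yseq (n+1) - Yseq n / 2 := by
  have expand : ((n:ℝ)+2) * Yseq (n+2)
      = ∑ k ∈ Finset.range (n+3), ((n:ℝ)+2) * (aseq k * bseq (n+2-k)) := by
    rw [Yseq, Finset.mul_sum]
  have split : ∀ k ∈ Finset.range (n+3),
      ((n:ℝ)+2) * (aseq k * bseq (n+2-k))
        = (k:ℝ) * aseq k * bseq (n+2-k) + ((n+2-k : ℕ):ℝ) * (aseq k * bseq (n+2-k)) := by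
    intro k hk
    have hk' : k ≤ n+2 := Nat.lt_succ_iff.mp (Finset.mem_range.mp hk)
    rw [Nat.cast_sub hk']
    push_cast
    ring
  rw [expand, Finset.sum_congr rfl split, Finset.sum_add_distrib]
  have hS1 : ∑ k ∈ Finset.range (n+3), (k:ℝ) * aseq k * bseq (n+2-k) = Yseq (n+1) / 2 := by
    have := sum_k_aux (n+1)
    simpa using this
  have hS2 : ∑ k ∈ Finset.range (n+3), ((n+2-k : ℕ):ℝ) * (aseq k * bseq (n+2-k))
      = ((n:ℝ) + 3/2) * Yseq (n+1) - Yseq n / 2 := by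
    rw [Finset.sum_range_succ]
    have hlast : ((n+2-(n+2) : ℕ):ℝ) * (aseq (n+2) * bseq (n+2-(n+2))) = 0 := by
      simp
    rw [hlast, add_zero]
    have hterm : ∀ k ∈ Finset.range (n+2),
        ((n+2-k : ℕ):ℝ) * (aseq k * bseq (n+2-k))
          = ((n:ℝ) + 3/2) * (aseq k * bseq (n+1-k)) - (k:ℝ) * aseq k * bseq (n+1-k) := by
      intro k hk
      have hk' : k ≤ n+1 := Nat.lt_succ_iff.mp (Finset.mem_range.mp hk)
      have h1 : n+2-k = (n+1-k)+1 := by omega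
      set m := n+1-k with hm
      have hcast : ((m:ℕ):ℝ) = (n:ℝ) + 1 - (k:ℝ) := by
        rw [hm, Nat.cast_sub hk']; push_cast; ring
      rw [h1, bseq_succ]
      have h2 : ((m+1 : ℕ):ℝ) = (m:ℝ) + 1 := by push_cast; ring
      rw [h2]
      have hb : ((m:ℝ)+1) * ((2*(m:ℝ)+1)/(2*(m:ℝ)+2)) = (m:ℝ) + 1/2 := by
        have : (2*(m:ℝ)+2) ≠ 0 := by positivity
        field_simp
      calc ((m:ℝ)+1) * (aseq k * (bseq m * ((2*(m:ℝ)+1)/(2*(m:ℝ)+2))))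
          = (((m:ℝ)+1) * ((2*(m:ℝ)+1)/(2*(m:ℝ)+2))) * (aseq k * bseq m) := by ring
        _ = ((m:ℝ) + 1/2) * (aseq k * bseq m) := by rw [hb]
        _ = ((n:ℝ) + 3/2) * (aseq k * bseq m) - (k:ℝ) * aseq k * bseq m := by
            rw [hcast]; ring
    rw [Finset.sum_congr rfl hterm, Finset.sum_sub_distrib, ← Finset.mul_sum, sum_k_aux n]
    rfl
  rw [hS1, hS2]
  have hY : Yseq (n+1) = ∑ k ∈ Finset.range (n+2), aseq k * bseq (n+1-k) := rfl
  ring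

lemma Yseq_rec' (n : ℕ) :
    Yseq (n+2) = Yseq (n+1) - Yseq n / (2 * ((n:ℝ)+2)) := by
  have h := Yseq_rec n
  have hn : ((n:ℝ)+2) ≠ 0 := by positivity
  field_simp at h ⊢
  linarith

lemma Zseq'_eq_Yseq (n : ℕ) : Zseq' n = Yseq n := by
  induction n using Nat.twoStepInduction with
  | zero => rw [Zseq'_zero, Yseq_zero]
  | one => rw [Zseq'_one, Yseq_one]
  | more m ih1 ih2 =>
    rw [Zseq'_rec, Yseq_rec', ih1, ih2]

lemma W_bseq (n : ℕ) : Real.Wallis.W n * (bseq n)^2 * (2*(n:ℝ)+1) = 1 := by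
  induction n with
  | zero => simp [Real.Wallis.W, bseq_zero]
  | succ m ih =>
    have h1 : (2*(m:ℝ)+1) ≠ 0 := by positivity
    have h2 : (2*(m:ℝ)+2) ≠ 0 := by positivity
    have h3 : (2*(m:ℝ)+3) ≠ 0 := by positivity
    rw [Real.Wallis.W_succ, bseq_succ]
    have hcast : 2*((m:ℕ)+1:ℝ)+1 = 2*(m:ℝ)+3 := by push_cast; ring
    push_cast
    have e1 : Real.Wallis.W m * ((2*(m:ℝ)+2)/(2*(m:ℝ)+1) * ((2*(m:ℝ)+2)/(2*(m:ℝ)+3)))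
          * (bseq m * ((2*(m:ℝ)+1)/(2*(m:ℝ)+2)))^2 * (2*((m:ℝ)+1)+1)
        = (Real.Wallis.W m * (bseq m)^2 * (2*(m:ℝ)+1))
          * ((2*(m:ℝ)+2)/(2*(m:ℝ)+1) * ((2*(m:ℝ)+2)/(2*(m:ℝ)+3))
            * ((2*(m:ℝ)+1)/(2*(m:ℝ)+2))^2 * ((2*(m:ℝ)+3)/(2*(m:ℝ)+1))) := by
      field_simp
      ring
    rw [e1, ih, one_mul]
    field_simp

lemma bseq_sq_le {n : ℕ} (hn : 1 ≤ n) : (bseq n)^2 * (Real.pi * n) ≤ 1 := by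
  have hW := Real.Wallis.le_W n
  have hrel := W_bseq n
  have hb : 0 < (bseq n)^2 := pow_pos (bseq_pos n) 2
  have h1 : (0:ℝ) < 2*(n:ℝ)+1 := by positivity
  have h2 : (0:ℝ) < 2*(n:ℝ)+2 := by positivity
  have hπ : (0:ℝ) < Real.pi := Real.pi_pos
  have hn1 : (1:ℝ) ≤ (n:ℝ) := by exact_mod_cast hn
  -- from hW : (2n+1)/(2n+2) * (π/2) ≤ W n, and W n * b² * (2n+1) = 1
  have key : ((2*(n:ℝ)+1)/(2*(n:ℝ)+2) * (Real.pi/2)) * ((bseq n)^2 * (2*(n:ℝ)+1)) ≤ 1 := by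
    calc ((2*(n:ℝ)+1)/(2*(n:ℝ)+2) * (Real.pi/2)) * ((bseq n)^2 * (2*(n:ℝ)+1))
        ≤ Real.Wallis.W n * ((bseq n)^2 * (2*(n:ℝ)+1)) := by
          exact mul_le_mul_of_nonneg_right hW
            (by positivity : (0:ℝ) ≤ (bseq n)^2 * (2*(n:ℝ)+1))
      _ = 1 := by rw [← mul_assoc]; exact hrel
  have hfrac : Real.pi * (n:ℝ) ≤ (2*(n:ℝ)+1)/(2*(n:ℝ)+2) * (Real.pi/2) * (2*(n:ℝ)+1) := by
    rw [div_mul_eq_mul_div, div_mul_eq_mul_div, le_div_iff₀ h2]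
    nlinarith
  calc (bseq n)^2 * (Real.pi * n)
      ≤ (bseq n)^2 * ((2*(n:ℝ)+1)/(2*(n:ℝ)+2) * (Real.pi/2) * (2*(n:ℝ)+1)) :=
        mul_le_mul_of_nonneg_left hfrac hb.le
    _ = ((2*(n:ℝ)+1)/(2*(n:ℝ)+2) * (Real.pi/2)) * ((bseq n)^2 * (2*(n:ℝ)+1)) := by ring
    _ ≤ 1 := key

lemma bseq_le_sqrt {n : ℕ} (hn : 1 ≤ n) : bseq n ≤ Real.sqrt (1/(Real.pi * n)) := by
  have hπn : (0:ℝ) < Real.pi * n := by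
    have := Real.pi_pos
    have hn1 : (1:ℝ) ≤ (n:ℝ) := by exact_mod_cast hn
    positivity
  have h := bseq_sq_le hn
  have h2 : (bseq n)^2 ≤ 1/(Real.pi * n) := by
    rw [le_div_iff₀ hπn]
    linarith
  calc bseq n = Real.sqrt ((bseq n)^2) := (Real.sqrt_sq (bseq_pos n).le).symm
    _ ≤ Real.sqrt (1/(Real.pi * n)) := Real.sqrt_le_sqrt h2

lemma geom_tail_le (a m : ℕ) : ∑ k ∈ Finset.Ico (a+1) m, (2:ℝ)⁻¹ ^ k ≤ (2:ℝ)⁻¹ ^ a := by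
  rw [Finset.sum_Ico_eq_sum_range]
  have : ∀ k : ℕ, (2:ℝ)⁻¹ ^ (a+1+k) = (2:ℝ)⁻¹ ^ (a+1) * (2:ℝ)⁻¹ ^ k := fun k => pow_add _ _ _
  rw [Finset.sum_congr rfl fun k _ => this k, ← Finset.mul_sum]
  have hg : ∑ k ∈ Finset.range (m - (a+1)), (2:ℝ)⁻¹ ^ k ≤ 2 := by
    have := sum_geometric_two_le (m - (a+1))
    simpa [one_div] using this
  calc (2:ℝ)⁻¹ ^ (a+1) * ∑ k ∈ Finset.range (m - (a+1)), (2:ℝ)⁻¹ ^ k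
      ≤ (2:ℝ)⁻¹ ^ (a+1) * 2 := by
        exact mul_le_mul_of_nonneg_left hg (by positivity)
    _ = (2:ℝ)⁻¹ ^ a := by rw [pow_succ]; ring

lemma Yseq_le (K n : ℕ) (hn : 2*K+2 ≤ n) :
    Yseq n ≤ Real.exp 2⁻¹ * Real.sqrt (1/(Real.pi * (n - K : ℕ)))
      + (2:ℝ)⁻¹ ^ K * Real.sqrt (1/(Real.pi * (n - n/2 : ℕ)))
      + 2 * (2:ℝ)⁻¹ ^ (n/2) := by
  set h := n/2 with hh
  have hKh : K + 1 ≤ h := by omega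
  have hhn : h + 1 ≤ n + 1 := by omega
  have hnK1 : 1 ≤ n - K := by omega
  have hnh1 : 1 ≤ n - h := by omega
  set f : ℕ → ℝ := fun k => aseq k * bseq (n - k) with hf
  have hsplit : Yseq n = (∑ k ∈ Finset.Ico 0 (K+1), f k) + (∑ k ∈ Finset.Ico (K+1) (h+1), f k)
      + (∑ k ∈ Finset.Ico (h+1) (n+1), f k) := by
    rw [Yseq, Finset.range_eq_Ico,
      ← Finset.sum_Ico_consecutive f (Nat.zero_le (h+1)) hhn,
      ← Finset.sum_Ico_consecutive f (Nat.zero_le (K+1)) (by omega : K+1 ≤ h+1)]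
  rw [hsplit]
  have hP1 : (∑ k ∈ Finset.Ico 0 (K+1), f k)
      ≤ Real.exp 2⁻¹ * Real.sqrt (1/(Real.pi * (n - K : ℕ))) := by
    have hterm : ∀ k ∈ Finset.Ico 0 (K+1),
        f k ≤ aseq k * Real.sqrt (1/(Real.pi * (n - K : ℕ))) := by
      intro k hk
      have hkK : k ≤ K := by
        have := (Finset.mem_Ico.mp hk).2; omega
      have hb1 : bseq (n - k) ≤ bseq (n - K) := bseq_antitone (by omega)
      have hb2 : bseq (n - K) ≤ Real.sqrt (1/(Real.pi * (n - K : ℕ))) := bseq_le_sqrt hnK1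
      exact mul_le_mul_of_nonneg_left (le_trans hb1 hb2) (aseq_pos k).le
    calc (∑ k ∈ Finset.Ico 0 (K+1), f k)
        ≤ ∑ k ∈ Finset.Ico 0 (K+1), aseq k * Real.sqrt (1/(Real.pi * (n - K : ℕ))) :=
          Finset.sum_le_sum hterm
      _ = (∑ k ∈ Finset.range (K+1), aseq k) * Real.sqrt (1/(Real.pi * (n - K : ℕ))) := by
          rw [← Finset.sum_mul, Finset.range_eq_Ico]
      _ ≤ Real.exp 2⁻¹ * Real.sqrt (1/(Real.pi * (n - K : ℕ))) := by
          apply mul_le_mul_of_nonneg_right _ (Real.sqrt_nonneg _)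
          have := Real.sum_le_exp_of_nonneg (by norm_num : (0:ℝ) ≤ 2⁻¹) (K+1)
          simpa [aseq] using this
  have hP2 : (∑ k ∈ Finset.Ico (K+1) (h+1), f k)
      ≤ (2:ℝ)⁻¹ ^ K * Real.sqrt (1/(Real.pi * (n - h : ℕ))) := by
    have hterm : ∀ k ∈ Finset.Ico (K+1) (h+1),
        f k ≤ (2:ℝ)⁻¹ ^ k * Real.sqrt (1/(Real.pi * (n - h : ℕ))) := by
      intro k hk
      have hkh : k ≤ h := by
        have := (Finset.mem_Ico.mp hk).2; omega
      have hb1 : bseq (n - k) ≤ bseq (n - h) := bseq_antitone (by omega)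
      have hb2 : bseq (n - h) ≤ Real.sqrt (1/(Real.pi * (n - h : ℕ))) := bseq_le_sqrt hnh1
      calc f k ≤ aseq k * Real.sqrt (1/(Real.pi * (n - h : ℕ))) :=
            mul_le_mul_of_nonneg_left (le_trans hb1 hb2) (aseq_pos k).le
        _ ≤ (2:ℝ)⁻¹ ^ k * Real.sqrt (1/(Real.pi * (n - h : ℕ))) :=
            mul_le_mul_of_nonneg_right (aseq_le k) (Real.sqrt_nonneg _)
    calc (∑ k ∈ Finset.Ico (K+1) (h+1), f k)
        ≤ ∑ k ∈ Finset.Ico (K+1) (h+1), (2:ℝ)⁻¹ ^ k * Real.sqrt (1/(Real.pi * (n - h : ℕ))) :=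
          Finset.sum_le_sum hterm
      _ = (∑ k ∈ Finset.Ico (K+1) (h+1), (2:ℝ)⁻¹ ^ k) * Real.sqrt (1/(Real.pi * (n - h : ℕ))) := by
          rw [← Finset.sum_mul]
      _ ≤ (2:ℝ)⁻¹ ^ K * Real.sqrt (1/(Real.pi * (n - h : ℕ))) :=
          mul_le_mul_of_nonneg_right (geom_tail_le K (h+1)) (Real.sqrt_nonneg _)
  have hP3 : (∑ k ∈ Finset.Ico (h+1) (n+1), f k) ≤ 2 * (2:ℝ)⁻¹ ^ h := by
    have hterm : ∀ k ∈ Finset.Ico (h+1) (n+1), f k ≤ (2:ℝ)⁻¹ ^ k := by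
      intro k _
      calc f k ≤ aseq k * 1 :=
            mul_le_mul_of_nonneg_left (bseq_le_one _) (aseq_pos k).le
        _ = aseq k := mul_one _
        _ ≤ (2:ℝ)⁻¹ ^ k := aseq_le k
    calc (∑ k ∈ Finset.Ico (h+1) (n+1), f k)
        ≤ ∑ k ∈ Finset.Ico (h+1) (n+1), (2:ℝ)⁻¹ ^ k := Finset.sum_le_sum hterm
      _ ≤ (2:ℝ)⁻¹ ^ h := geom_tail_le h (n+1)
      _ ≤ 2 * (2:ℝ)⁻¹ ^ h := by nlinarith [pow_pos (by norm_num : (0:ℝ) < 2⁻¹) h]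
  linarith

lemma target_eq : Real.sqrt (Real.exp 1 / Real.pi) = Real.exp 2⁻¹ * Real.sqrt (1/Real.pi) := by
  have h1 : Real.exp 1 / Real.pi = (Real.exp 2⁻¹)^2 * (1/Real.pi) := by
    have : (Real.exp 2⁻¹)^2 = Real.exp 1 := by
      rw [sq, ← Real.exp_add]; norm_num
    rw [this]; ring
  rw [h1, Real.sqrt_mul (by positivity), Real.sqrt_sq (Real.exp_pos _).le]

lemma tendsto_sqrt_ratio (K : ℕ) :
    Filter.Tendsto (fun n : ℕ => Real.sqrt ((n:ℝ) * (1/(Real.pi * ((n - K : ℕ):ℝ)))))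
      Filter.atTop (nhds (Real.sqrt (1/Real.pi))) := by
  have hπ := Real.pi_pos
  have hAt : Filter.Tendsto (fun n : ℕ => (n:ℝ) - (K:ℝ)) Filter.atTop Filter.atTop :=
    Filter.tendsto_atTop_add_const_right _ _ tendsto_natCast_atTop_atTop
  have h0 : Filter.Tendsto (fun n : ℕ => (K:ℝ)/((n:ℝ)-(K:ℝ))) Filter.atTop (nhds 0) :=
    Filter.Tendsto.div_atTop tendsto_const_nhds hAt
  have hw : Filter.Tendsto (fun n : ℕ => (1/Real.pi) * (1 + (K:ℝ)/((n:ℝ)-(K:ℝ))))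
      Filter.atTop (nhds (1/Real.pi)) := by
    have := ((tendsto_const_nhds (x := (1:ℝ))).add h0).const_mul (1/Real.pi)
    simpa using this
  have heq : ∀ᶠ n : ℕ in Filter.atTop,
      (1/Real.pi) * (1 + (K:ℝ)/((n:ℝ)-(K:ℝ))) = (n:ℝ) * (1/(Real.pi * ((n - K : ℕ):ℝ))) := by
    filter_upwards [Filter.eventually_ge_atTop (K+1)] with n hn
    have hcast : ((n - K : ℕ):ℝ) = (n:ℝ) - (K:ℝ) := by
      rw [Nat.cast_sub (by omega)]
    have hpos : (0:ℝ) < (n:ℝ) - (K:ℝ) := by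
      have : (K:ℝ) + 1 ≤ (n:ℝ) := by exact_mod_cast hn
      linarith
    rw [hcast]
    field_simp
    ring
  exact (Filter.Tendsto.congr' heq hw).sqrt

lemma tendsto_third : Filter.Tendsto (fun n : ℕ => 2 * Real.sqrt (n:ℝ) * (2:ℝ)⁻¹ ^ (n/2))
    Filter.atTop (nhds 0) := by
  set r : ℝ := Real.sqrt 2⁻¹ with hr
  have hr0 : 0 < r := Real.sqrt_pos.2 (by norm_num)
  have hr2 : r^2 = 2⁻¹ := Real.sq_sqrt (by norm_num)
  have hr1 : r < 1 := by nlinarith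
  have hbound : ∀ᶠ n : ℕ in Filter.atTop,
      2 * Real.sqrt (n:ℝ) * (2:ℝ)⁻¹ ^ (n/2) ≤ (2*Real.sqrt 2) * ((n:ℝ)^1 * r ^ n) := by
    filter_upwards [Filter.eventually_ge_atTop 1] with n hn
    have hn1 : (1:ℝ) ≤ (n:ℝ) := by exact_mod_cast hn
    have hs : Real.sqrt (n:ℝ) ≤ (n:ℝ) := by
      calc Real.sqrt (n:ℝ) ≤ Real.sqrt ((n:ℝ)^2) := Real.sqrt_le_sqrt (by nlinarith)
        _ = (n:ℝ) := Real.sqrt_sq (by linarith)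
    have hpow : (2:ℝ)⁻¹ ^ (n/2) ≤ Real.sqrt 2 * r ^ n := by
      have h1 : (2:ℝ)⁻¹ ^ (n/2) = r ^ (2*(n/2)) := by
        rw [pow_mul, hr2]
      have h2 : r ^ (2*(n/2)) ≤ r ^ (n-1) :=
        pow_le_pow_of_le_one hr0.le hr1.le (by omega)
      have h3 : r ^ (n-1) = r ^ n / r := by
        rw [eq_div_iff hr0.ne', ← pow_succ]
        congr 1
        omega
      have h4 : r ^ n / r = Real.sqrt 2 * r ^ n := by
        rw [div_eq_iff hr0.ne']
        have : Real.sqrt 2 * r = 1 := by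
          rw [hr, ← Real.sqrt_mul (by norm_num)]
          norm_num
        calc r ^ n = r ^ n * 1 := (mul_one _).symm
          _ = r ^ n * (Real.sqrt 2 * r) := by rw [this]
          _ = Real.sqrt 2 * r ^ n * r := by ring
      rw [h1]
      calc r ^ (2*(n/2)) ≤ r ^ (n-1) := h2
        _ = Real.sqrt 2 * r ^ n := by rw [h3, h4]
    calc 2 * Real.sqrt (n:ℝ) * (2:ℝ)⁻¹ ^ (n/2)
        ≤ 2 * (n:ℝ) * (Real.sqrt 2 * r ^ n) := by
          apply mul_le_mul (by nlinarith [Real.sqrt_nonneg (n:ℝ)]) hpow (by positivity)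
          positivity
      _ = (2*Real.sqrt 2) * ((n:ℝ)^1 * r ^ n) := by ring
  have hlim : Filter.Tendsto (fun n : ℕ => (2*Real.sqrt 2) * ((n:ℝ)^1 * r ^ n))
      Filter.atTop (nhds 0) := by
    have := (tendsto_pow_const_mul_const_pow_of_abs_lt_one 1
      (by rw [abs_of_pos hr0]; exact hr1)).const_mul (2*Real.sqrt 2)
    simpa using this
  apply squeeze_zero' ?_ hbound hlim
  filter_upwards with n
  positivity

theorem Zseq'_limsup_le :
    Filter.limsup (fun n : ℕ => Zseq' n * Real.sqrt n) Filter.atTop ≤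
      Real.sqrt (Real.exp 1 / Real.pi) := by
  set T := Real.sqrt (Real.exp 1 / Real.pi) with hT
  set u := fun n : ℕ => Zseq' n * Real.sqrt n with hu
  have hu0 : ∀ n, 0 ≤ u n := fun n => mul_nonneg (Zseq'_pos n).le (Real.sqrt_nonneg _)
  have hcob : Filter.IsCoboundedUnder (· ≤ ·) Filter.atTop u :=
    Filter.isCoboundedUnder_le_of_eventually_le Filter.atTop (x := 0)
      (by filter_upwards with n using hu0 n)
  apply le_of_forall_pos_le_add
  intro ε hε
  -- choose K
  have hgeo : Filter.Tendsto (fun K : ℕ => (2:ℝ)⁻¹ ^ K * Real.sqrt (2/Real.pi))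
      Filter.atTop (nhds 0) := by
    have := (tendsto_pow_atTop_nhds_zero_of_lt_one (by norm_num : (0:ℝ) ≤ 2⁻¹)
      (by norm_num : (2:ℝ)⁻¹ < 1)).mul_const (Real.sqrt (2/Real.pi))
    simpa using this
  obtain ⟨K, hK⟩ : ∃ K : ℕ, (2:ℝ)⁻¹ ^ K * Real.sqrt (2/Real.pi) ≤ ε/2 := by
    have := (hgeo.eventually (eventually_le_nhds (by positivity : (0:ℝ) < ε/2))).exists
    exact this
  -- the dominating sequence
  set v := fun n : ℕ => Real.exp 2⁻¹ * Real.sqrt ((n:ℝ) * (1/(Real.pi * ((n - K : ℕ):ℝ))))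
    + ε/2 + 2 * Real.sqrt (n:ℝ) * (2:ℝ)⁻¹ ^ (n/2) with hv
  have hB : Filter.Tendsto v Filter.atTop
      (nhds (Real.exp 2⁻¹ * Real.sqrt (1/Real.pi) + ε/2 + 0)) := by
    exact (((tendsto_sqrt_ratio K).const_mul _).add tendsto_const_nhds).add tendsto_third
  have hlimv : Real.exp 2⁻¹ * Real.sqrt (1/Real.pi) + ε/2 + 0 = T + ε/2 := by
    rw [hT, target_eq]; ring
  rw [hlimv] at hB
  have hvev : ∀ᶠ n : ℕ in Filter.atTop, v n ≤ T + ε := by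
    have hlt : T + ε/2 < T + ε := by linarith
    exact hB.eventually (eventually_le_nhds hlt)
  have huv : ∀ᶠ n : ℕ in Filter.atTop, u n ≤ v n := by
    filter_upwards [Filter.eventually_ge_atTop (2*K+2)] with n hn
    have h2 : 1 ≤ n - n/2 := by omega
    have hπ := Real.pi_pos
    have hYb := Yseq_le K n hn
    have hsqn : (0:ℝ) ≤ Real.sqrt (n:ℝ) := Real.sqrt_nonneg _
    have hZY : Zseq' n = Yseq n := Zseq'_eq_Yseq n
    have step : u n ≤ (Real.exp 2⁻¹ * Real.sqrt (1/(Real.pi * (n - K : ℕ)))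
        + (2:ℝ)⁻¹ ^ K * Real.sqrt (1/(Real.pi * (n - n/2 : ℕ)))
        + 2 * (2:ℝ)⁻¹ ^ (n/2)) * Real.sqrt (n:ℝ) := by
      have hun : u n = Yseq n * Real.sqrt (n:ℝ) := by
        show Zseq' n * Real.sqrt (n:ℝ) = _
        rw [hZY]
      rw [hun]
      exact mul_le_mul_of_nonneg_right hYb hsqn
    have e1 : Real.sqrt (1/(Real.pi * ((n - K : ℕ):ℝ))) * Real.sqrt (n:ℝ)
        = Real.sqrt ((n:ℝ) * (1/(Real.pi * ((n - K : ℕ):ℝ)))) := by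
      rw [mul_comm, ← Real.sqrt_mul (Nat.cast_nonneg n)]
    have e2 : (2:ℝ)⁻¹ ^ K * Real.sqrt (1/(Real.pi * ((n - n/2 : ℕ):ℝ))) * Real.sqrt (n:ℝ)
        ≤ ε/2 := by
      have hmid : Real.sqrt (1/(Real.pi * ((n - n/2 : ℕ):ℝ))) * Real.sqrt (n:ℝ)
          ≤ Real.sqrt (2/Real.pi) := by
        rw [← Real.sqrt_mul (by positivity) (n:ℝ)]
        apply Real.sqrt_le_sqrt
        have hpos : (0:ℝ) < ((n - n/2 : ℕ):ℝ) := by exact_mod_cast h2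
        rw [div_mul_eq_mul_div, one_mul, div_le_div_iff₀ (by positivity) hπ]
        have hnat : (n:ℝ) ≤ 2 * ((n - n/2 : ℕ):ℝ) := by
          have : n ≤ 2 * (n - n/2) := by omega
          exact_mod_cast this
        nlinarith
      calc (2:ℝ)⁻¹ ^ K * Real.sqrt (1/(Real.pi * ((n - n/2 : ℕ):ℝ))) * Real.sqrt (n:ℝ)
          = (2:ℝ)⁻¹ ^ K * (Real.sqrt (1/(Real.pi * ((n - n/2 : ℕ):ℝ))) * Real.sqrt (n:ℝ)) := by
            ring
        _ ≤ (2:ℝ)⁻¹ ^ K * Real.sqrt (2/Real.pi) := by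
            exact mul_le_mul_of_nonneg_left hmid (by positivity)
        _ ≤ ε/2 := hK
    calc u n ≤ (Real.exp 2⁻¹ * Real.sqrt (1/(Real.pi * (n - K : ℕ)))
        + (2:ℝ)⁻¹ ^ K * Real.sqrt (1/(Real.pi * (n - n/2 : ℕ)))
        + 2 * (2:ℝ)⁻¹ ^ (n/2)) * Real.sqrt (n:ℝ) := step
      _ = Real.exp 2⁻¹ * (Real.sqrt (1/(Real.pi * ((n - K : ℕ):ℝ))) * Real.sqrt (n:ℝ))
          + (2:ℝ)⁻¹ ^ K * Real.sqrt (1/(Real.pi * ((n - n/2 : ℕ):ℝ))) * Real.sqrt (n:ℝ)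
          + 2 * Real.sqrt (n:ℝ) * (2:ℝ)⁻¹ ^ (n/2) := by ring
      _ ≤ Real.exp 2⁻¹ * Real.sqrt ((n:ℝ) * (1/(Real.pi * ((n - K : ℕ):ℝ))))
          + ε/2 + 2 * Real.sqrt (n:ℝ) * (2:ℝ)⁻¹ ^ (n/2) := by
          rw [e1]
          exact add_le_add (add_le_add le_rfl e2) le_rfl
      _ = v n := rfl
  apply Filter.limsup_le_of_le hcob
  filter_upwards [huv, hvev] with n h1 h2
  exact le_trans h1 h2


/-- `limsup_{n→∞} Z_n · sqrt n ≤ sqrt(e/π)`. -/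
theorem Zseq_limsup_le :
    Filter.limsup (fun n : ℕ => Zseq n * Real.sqrt n) Filter.atTop ≤
      Real.sqrt (Real.exp 1 / Real.pi) := by
  have h : ∀ n : ℕ, Zseq n = Zseq' n := fun n => rfl
  simp only [h]
  exact Zseq'_limsup_le
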